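/- arXiv:2308.13075 — 2 statements merged into one kernel-verified Lean document; each statement's English description precedes it below -/
import Mathlib

section
/- Let (A_ℓ) be a sequence of abelian groups with surjections φ_ℓ : A_ℓ → A_{ℓ+1} having kernel A_ℓ[p], and suppose A_{n₁} ≅ A_{n₂} for some n₂ > n₁ via an isomorphism identifying the composite map φ_{n₁,n₂} with an endomorphism f of C := A_{n₁}. Then ker(f^∘ℓ) = C[p^{(n₂−n₁)ℓ}] for all ℓ ≥ 1, and hence C[p^∞] = C[f^∞]. -/
/-!
The kernel of `φ_{n₁,n₁+k}` is `A_{n₁}[p^k]`, by induction on `k` from `ker φ_ℓ = A_ℓ[p]`, so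
`ker f = C[p^k]`. An endomorphism whose kernel is the `m`-torsion has `ker f^[ℓ] = C[m^ℓ]`,
and for `k ≥ 1` the exponents `k ℓ` are cofinal among all exponents of `p`.
-/

/-- The composite `φ_{ℓ₁,ℓ₂} : A_{ℓ₁} →+ A_{ℓ₁+k}` of the maps
`φ_{ℓ,ℓ+1}`. -/
def compMap {A : ℕ → Type*} [∀ ℓ, AddCommGroup (A ℓ)]
    (φ : ∀ ℓ, A ℓ →+ A (ℓ + 1)) (ℓ₁ : ℕ) : ∀ k : ℕ, A ℓ₁ →+ A (ℓ₁ + k)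
  | 0 => AddMonoidHom.id _
  | k + 1 => (φ (ℓ₁ + k)).comp (compMap φ ℓ₁ k)

theorem compMap_apply_eq_zero_iff {A : ℕ → Type*} [∀ ℓ, AddCommGroup (A ℓ)] {p : ℕ}
    {φ : ∀ ℓ, A ℓ →+ A (ℓ + 1)} (hker : ∀ ℓ, ∀ x : A ℓ, φ ℓ x = 0 ↔ p • x = 0)
    (n k : ℕ) (x : A n) : compMap φ n k x = 0 ↔ p ^ k • x = 0 := by
  induction k generalizing x with
  | zero => simp [compMap]
  | succ k ih =>
    change φ (n + k) (compMap φ n k x) = 0 ↔ _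
    rw [hker, ← map_nsmul, ih, smul_smul, ← pow_succ]

theorem AddMonoidHom.iterate_apply_eq_zero_iff {M : Type*} [AddMonoid M] {f : M →+ M} {m : ℕ}
    (hf : ∀ x, f x = 0 ↔ m • x = 0) (ℓ : ℕ) (x : M) : f^[ℓ] x = 0 ↔ m ^ ℓ • x = 0 := by
  induction ℓ generalizing x with
  | zero => simp
  | succ ℓ ih =>
    rw [Function.iterate_succ_apply, ih, ← map_nsmul, hf, smul_smul, ← pow_succ']

theorem exists_pow_nsmul_eq_zero_iff_exists_pow_pow_nsmul_eq_zero {M : Type*} [AddMonoid M]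
    (p : ℕ) {k : ℕ} (hk : 1 ≤ k) (x : M) :
    (∃ ℓ : ℕ, p ^ ℓ • x = 0) ↔ ∃ ℓ : ℕ, (p ^ k) ^ ℓ • x = 0 := by
  constructor
  · rintro ⟨ℓ, hℓ⟩
    refine ⟨ℓ, ?_⟩
    obtain ⟨d, hd⟩ : p ^ ℓ ∣ (p ^ k) ^ ℓ := by
      rw [← pow_mul]
      exact pow_dvd_pow p (Nat.le_mul_of_pos_left ℓ hk)
    rw [hd, mul_comm, mul_smul, hℓ, smul_zero]
  · rintro ⟨ℓ, hℓ⟩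
    exact ⟨k * ℓ, by rwa [pow_mul]⟩

theorem stmt_15_general {A : ℕ → Type*} [∀ ℓ, AddCommGroup (A ℓ)] (p : ℕ)
    (φ : ∀ ℓ, A ℓ →+ A (ℓ + 1))
    (hker : ∀ ℓ, ∀ x : A ℓ, φ ℓ x = 0 ↔ p • x = 0)
    (n₁ k : ℕ) (hk : 1 ≤ k) (ψ : A (n₁ + k) ≃+ A n₁)
    (f : A n₁ →+ A n₁) (hf : f = ψ.toAddMonoidHom.comp (compMap φ n₁ k)) :
    (∀ ℓ : ℕ, 1 ≤ ℓ → ∀ x : A n₁, (⇑f)^[ℓ] x = 0 ↔ p ^ (k * ℓ) • x = 0) ∧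
    {x : A n₁ | ∃ ℓ : ℕ, p ^ ℓ • x = 0} = {x : A n₁ | ∃ ℓ : ℕ, (⇑f)^[ℓ] x = 0} := by
  have hf_ker (x : A n₁) : f x = 0 ↔ p ^ k • x = 0 := by
    rw [hf, AddMonoidHom.comp_apply, AddEquiv.coe_toAddMonoidHom, map_eq_zero_iff ψ ψ.injective,
      compMap_apply_eq_zero_iff hker]
  have hiter (ℓ : ℕ) (x : A n₁) : f^[ℓ] x = 0 ↔ (p ^ k) ^ ℓ • x = 0 :=
    AddMonoidHom.iterate_apply_eq_zero_iff hf_ker ℓ x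
  refine ⟨fun ℓ _ x => by rw [hiter, pow_mul], ?_⟩
  ext x
  simp only [Set.mem_ofPred_eq, hiter]
  exact exists_pow_nsmul_eq_zero_iff_exists_pow_pow_nsmul_eq_zero p hk x

/-- With surjections `φ_ℓ : A_ℓ → A_{ℓ+1}` having kernel `A_ℓ[p]`, an
isomorphism `ψ : A_{n₁+k} ≃ A_{n₁}` (with `k ≥ 1`, i.e. `n₂ = n₁ + k > n₁`)
identifies the composite `φ_{n₁,n₂}` with an endomorphism `f` of
`C := A_{n₁}` satisfying `ker (f^[ℓ]) = C[p^{(n₂-n₁)ℓ}]` for all `ℓ ≥ 1`,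
and hence `C[p^∞] = C[f^∞]`. -/
theorem stmt_15 {A : ℕ → Type*} [∀ ℓ, AddCommGroup (A ℓ)] (p : ℕ)
    (hp : 1 ≤ p) (φ : ∀ ℓ, A ℓ →+ A (ℓ + 1))
    (hsurj : ∀ ℓ, Function.Surjective (φ ℓ))
    (hker : ∀ ℓ, ∀ x : A ℓ, φ ℓ x = 0 ↔ p • x = 0)
    (n₁ k : ℕ) (hk : 1 ≤ k) (ψ : A (n₁ + k) ≃+ A n₁)
    (f : A n₁ →+ A n₁) (hf : f = ψ.toAddMonoidHom.comp (compMap φ n₁ k)) :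
    (∀ ℓ : ℕ, 1 ≤ ℓ → ∀ x : A n₁, (⇑f)^[ℓ] x = 0 ↔ p ^ (k * ℓ) • x = 0) ∧
    {x : A n₁ | ∃ ℓ : ℕ, p ^ ℓ • x = 0} = {x : A n₁ | ∃ ℓ : ℕ, (⇑f)^[ℓ] x = 0} :=
  stmt_15_general p φ hker n₁ k hk ψ f hf
end

section
/- Let A be an abelian group with endomorphisms f and g such that g ∘ f = f ∘ g = multiplication by p^r, where f is surjective and ker(f^∘ℓ) = A[p^{rℓ}] for all ℓ. Then A[g^∞] = 0, i.e., if g^∘ℓ(x) = 0 for some ℓ ≥ 0 then x = 0. -/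
theorem AddMonoidHom.injective_of_comp_eq_nsmul {A B : Type*} [AddCommGroup A] [AddCommGroup B]
    {f : A →+ B} {g : B →+ A} {n : ℕ} (hgf : ∀ a, g (f a) = n • a)
    (hf : Function.Surjective f) (hker : ∀ a, n • a = 0 → f a = 0) :
    Function.Injective g := by
  refine (injective_iff_map_eq_zero g).mpr fun y hy => ?_
  obtain ⟨z, rfl⟩ := hf y
  exact hker z (by rw [← hgf, hy])

theorem stmt_16_general {A : Type*} [AddCommGroup A] (p r : ℕ) (f g : A →+ A)
    (hgf : ∀ a : A, g (f a) = p ^ r • a)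
    (hf : Function.Surjective f)
    (hker : ∀ ℓ : ℕ, 1 ≤ ℓ → ∀ x : A, (⇑f)^[ℓ] x = 0 ↔ p ^ (r * ℓ) • x = 0)
    (x : A) (ℓ : ℕ) (hx : (⇑g)^[ℓ] x = 0) :
    x = 0 := by
  have hker_f : ∀ a : A, p ^ r • a = 0 → f a = 0 := fun a ha => by
    simpa using (hker 1 le_rfl a).mpr (by simpa using ha)
  have hg : Function.Injective g := AddMonoidHom.injective_of_comp_eq_nsmul hgf hf hker_f
  exact hg.iterate ℓ (hx.trans (iterate_map_zero g ℓ).symm)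

/-- If `f, g` are endomorphisms of an abelian group `A` with
`g ∘ f = f ∘ g = [p^r]`, `f` surjective and `ker (f^[ℓ]) = A[p^{rℓ}]` for
all `ℓ ≥ 1`, then `A[g^∞] = 0`: if `g^[ℓ] x = 0` for some `ℓ` then `x = 0`. -/
theorem stmt_16 {A : Type*} [AddCommGroup A] (p r : ℕ) (hp : 1 ≤ p)
    (hr : 1 ≤ r) (f g : A →+ A)
    (hgf : ∀ a : A, g (f a) = p ^ r • a)
    (hfg : ∀ a : A, f (g a) = p ^ r • a)
    (hf : Function.Surjective f)
    (hker : ∀ ℓ : ℕ, 1 ≤ ℓ → ∀ x : A, (⇑f)^[ℓ] x = 0 ↔ p ^ (r * ℓ) • x = 0)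
    (x : A) (ℓ : ℕ) (hx : (⇑g)^[ℓ] x = 0) :
    x = 0 :=
  stmt_16_general p r f g hgf hf hker x ℓ hx
end
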